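/- There exists a constant C > 0 such that for every η ≥ 1, 0 ≤ ∫_ℝ (1 − ω(x + η)) ω'(x) dx ≤ C η e^{−√2 η}, where ω(x) = tanh(x/√2). -/

import Mathlib

/-!
Both factors of the integrand decay exponentially: `1 - ω y ≤ 2 e^{-√2 max(y, 0)}` and
`ω' x ≤ 2√2 e^{-√2 |x|}`. Hence the integrand is at most `4√2 e^{-√2 η}` on `[-η, 0]` and decays
like `e^{-√2 dist(x, [-η, 0])}` away from it. Both regimes are dominated by
`4√2 e · e^{-√2 η} e^{-|x|/η}`, whose integral is `8√2 e · η e^{-√2 η}`.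
-/

open Real MeasureTheory

/-- The Allen–Cahn heteroclinic `ω(x) = tanh (x/√2)`. -/
noncomputable def ω (x : ℝ) : ℝ := Real.tanh (x / Real.sqrt 2)

namespace Real

theorem hasDerivAt_tanh (x : ℝ) : HasDerivAt tanh (1 / cosh x ^ 2) x := by
  have h := (hasDerivAt_sinh x).div (hasDerivAt_cosh x) (cosh_pos x).ne'
  rw [show sinh / cosh = tanh from funext fun y => (tanh_eq_sinh_div_cosh y).symm] at h
  refine h.congr_deriv ?_
  rw [← cosh_sq_sub_sinh_sq x]
  ring

theorem one_sub_tanh_eq (x : ℝ) : 1 - tanh x = 2 / (exp (2 * x) + 1) := by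
  rw [tanh_eq, exp_neg, two_mul, exp_add]
  field_simp
  ring

theorem one_sub_tanh_le (x : ℝ) : 1 - tanh x ≤ 2 * exp (-(2 * max x 0)) := by
  rw [one_sub_tanh_eq, exp_neg, ← div_eq_mul_inv]
  gcongr
  rcases le_total x 0 with h | h
  · rw [max_eq_right h, mul_zero, exp_zero]
    linarith [exp_pos (2 * x)]
  · rw [max_eq_left h]
    linarith

theorem one_div_cosh_sq_le (x : ℝ) : 1 / cosh x ^ 2 ≤ 4 * exp (-(2 * |x|)) := by
  have h : exp |x| ≤ 2 * cosh x := by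
    rw [cosh_eq]
    linarith [exp_abs_le x]
  rw [exp_neg, ← div_eq_mul_inv, div_le_div_iff₀ (by positivity) (by positivity), two_mul,
    exp_add]
  nlinarith [exp_pos |x|]

end Real

theorem integral_exp_mul_abs {a : ℝ} (ha : a < 0) : ∫ x, exp (a * |x|) = -2 / a := by
  rw [integral_comp_abs (f := fun t => exp (a * t)), integral_exp_mul_Ioi ha, mul_zero, exp_zero]
  ring

-- A non-integrable function has Bochner integral `0`, so a nonzero value forces integrability.
theorem integrable_exp_mul_abs {a : ℝ} (ha : a < 0) : Integrable fun x => exp (a * |x|) :=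
  .of_integral_ne_zero <| by
    rw [integral_exp_mul_abs ha]
    exact div_ne_zero (by norm_num) ha.ne

theorem two_mul_div_sqrt_two (y : ℝ) : 2 * (y / √2) = √2 * y := by
  rw [mul_div_left_comm, div_sqrt, mul_comm]

theorem hasDerivAt_ω (x : ℝ) : HasDerivAt ω (1 / cosh (x / √2) ^ 2 / √2) x :=
  ((hasDerivAt_tanh (x / √2)).comp x ((hasDerivAt_id' x).div_const √2)).congr_deriv
    (mul_one_div _ _)

theorem deriv_ω (x : ℝ) : deriv ω x = 1 / cosh (x / √2) ^ 2 / √2 :=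
  (hasDerivAt_ω x).deriv

theorem continuous_ω : Continuous ω :=
  continuous_iff_continuousAt.2 fun x => (hasDerivAt_ω x).continuousAt

theorem deriv_ω_nonneg (x : ℝ) : 0 ≤ deriv ω x := by
  rw [deriv_ω]
  positivity

theorem deriv_ω_le (x : ℝ) : deriv ω x ≤ 2 * √2 * exp (-(√2 * |x|)) := by
  rw [deriv_ω]
  calc 1 / cosh (x / √2) ^ 2 / √2 ≤ 4 * exp (-(2 * |x / √2|)) / √2 := by
        gcongr
        exact one_div_cosh_sq_le _
    _ = 2 * √2 * exp (-(√2 * |x|)) := by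
        rw [abs_div, abs_of_pos (show (0 : ℝ) < √2 by positivity), two_mul_div_sqrt_two,
          show (4 : ℝ) = 2 * √2 * √2 by rw [mul_assoc, mul_self_sqrt zero_le_two]; norm_num]
        field_simp

theorem one_sub_ω_nonneg (y : ℝ) : 0 ≤ 1 - ω y :=
  sub_nonneg.2 (tanh_lt_one _).le

theorem one_sub_ω_le (y : ℝ) : 1 - ω y ≤ 2 * exp (-(√2 * max y 0)) := by
  calc 1 - ω y ≤ 2 * exp (-(2 * max (y / √2) 0)) := one_sub_tanh_le _
    _ = 2 * exp (-(√2 * max y 0)) := by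
        rw [show max (y / √2) 0 = max y 0 / √2 by
          rw [← max_div_div_right (sqrt_nonneg 2), zero_div], two_mul_div_sqrt_two]

theorem neg_mul_max_add_neg_mul_abs_le {s η : ℝ} (hη : 0 < η) (hsη : 1 ≤ s * η) (x : ℝ) :
    -(s * max (x + η) 0) + -(s * |x|) ≤ 1 + -s * η + -η⁻¹ * |x| := by
  have hinv : η⁻¹ * η = 1 := inv_mul_cancel₀ hη.ne'
  have hs : η⁻¹ ≤ s := by
    rw [inv_le_iff_one_le_mul₀ hη]
    linarith
  have hinv_pos : 0 < η⁻¹ := inv_pos.2 hη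
  rcases le_total 0 x with hx | hx
  · rw [max_eq_left (by linarith), abs_of_nonneg hx]
    nlinarith [mul_nonneg (sub_nonneg.2 hs) hx, mul_nonneg hinv_pos.le hx]
  rcases le_total (-η) x with hxη | hxη
  · rw [max_eq_left (by linarith), abs_of_nonpos hx]
    nlinarith [mul_nonneg hinv_pos.le (show 0 ≤ x + η by linarith)]
  · rw [max_eq_right (by linarith), abs_of_nonpos hx]
    nlinarith [mul_nonpos_of_nonneg_of_nonpos (sub_nonneg.2 hs) (show x + η ≤ 0 by linarith)]

theorem overlap_integrand_nonneg (η x : ℝ) : 0 ≤ (1 - ω (x + η)) * deriv ω x :=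
  mul_nonneg (one_sub_ω_nonneg _) (deriv_ω_nonneg x)

section Overlap

variable {η : ℝ}

theorem overlap_integrand_le (hη : 1 ≤ η) (x : ℝ) :
    (1 - ω (x + η)) * deriv ω x ≤ 4 * √2 * exp 1 * exp (-√2 * η) * exp (-η⁻¹ * |x|) := by
  have hsη : 1 ≤ √2 * η := by nlinarith [one_lt_sqrt_two]
  calc (1 - ω (x + η)) * deriv ω x
      ≤ 2 * exp (-(√2 * max (x + η) 0)) * (2 * √2 * exp (-(√2 * |x|))) :=
        mul_le_mul (one_sub_ω_le _) (deriv_ω_le x) (deriv_ω_nonneg x) (by positivity)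
    _ = 4 * √2 * exp (-(√2 * max (x + η) 0) + -(√2 * |x|)) := by
        rw [exp_add]
        ring
    _ ≤ 4 * √2 * exp (1 + -√2 * η + -η⁻¹ * |x|) :=
        mul_le_mul_of_nonneg_left
          (exp_le_exp.2 (neg_mul_max_add_neg_mul_abs_le (by linarith) hsη x)) (by positivity)
    _ = 4 * √2 * exp 1 * exp (-√2 * η) * exp (-η⁻¹ * |x|) := by
        rw [exp_add, exp_add]
        ring

theorem integrable_overlap_integrand (hη : 1 ≤ η) :
    Integrable fun x => (1 - ω (x + η)) * deriv ω x := by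
  have hmeas : Measurable fun x => (1 - ω (x + η)) * deriv ω x :=
    ((continuous_const.sub (continuous_ω.comp (continuous_add_const η))).measurable).mul
      (measurable_deriv ω)
  refine ((integrable_exp_mul_abs (neg_lt_zero.2 (inv_pos.2 (by linarith)))).const_mul
    (4 * √2 * exp 1 * exp (-√2 * η))).mono' hmeas.aestronglyMeasurable (ae_of_all _ fun x => ?_)
  rw [Real.norm_of_nonneg (overlap_integrand_nonneg η x)]
  exact overlap_integrand_le hη x

end Overlap

/-- The overlap integral `∫ (1 − ω(x+η)) ω'(x) dx` is nonnegative and of size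
`O(η e^{−√2 η})`. -/
theorem overlap_integral_bound : ∃ C : ℝ, 0 < C ∧
    ∀ η : ℝ, 1 ≤ η →
      0 ≤ (∫ x : ℝ, (1 - ω (x + η)) * deriv ω x) ∧
      (∫ x : ℝ, (1 - ω (x + η)) * deriv ω x) ≤ C * η * Real.exp (-(Real.sqrt 2) * η) := by
  refine ⟨8 * √2 * exp 1, by positivity, fun η hη =>
    ⟨integral_nonneg (overlap_integrand_nonneg η), ?_⟩⟩
  have hdecay : -η⁻¹ < 0 := neg_lt_zero.2 (inv_pos.2 (by linarith))
  calc ∫ x, (1 - ω (x + η)) * deriv ω x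
      ≤ ∫ x, 4 * √2 * exp 1 * exp (-√2 * η) * exp (-η⁻¹ * |x|) :=
        integral_mono (integrable_overlap_integrand hη)
          ((integrable_exp_mul_abs hdecay).const_mul _) (overlap_integrand_le hη)
    _ = 8 * √2 * exp 1 * η * exp (-√2 * η) := by
        rw [integral_const_mul, integral_exp_mul_abs hdecay]
        field_simp
        ring
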